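/- Let G be a finite group admitting an automorphism φ of prime order p with p coprime to |G| and [G, φ] = G. Let (M_k, L_k) be the upper nonsoluble series of G and (μ_i, λ_i) the upper nonsoluble series of C_G(φ). Fix k, and let {S_1, …, S_p} be a nontrivial orbit of φ on the set of subnormal simple factors of U_k = L_k/M_k; set S = S_1 × … × S_p and let D = C_S(φ) be the diagonal subgroup, a nonabelian simple group isomorphic to S_1. Then there exists an index i such that: for every φ-invariant subgroup F of G with F·M_k/M_k ≥ D, there exists a subgroup D̂ ≤ C_F(φ) with (1) D̂·M_k/M_k = D, (2) D̂ ≤ λ_i · M_k, and (3) D̂ is not contained in μ_i · M_k. -/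

import Mathlib

/-!
The fixed points `D` of `φ` on `S = S₁ × ⋯ × S_p` form a diagonal copy of `S₁`, hence a nontrivial
perfect group. Since `φ` acts coprimely, every `φ`-invariant coset of a `φ`-invariant subgroup
contains a fixed point, so `D` is the image of `C_F(φ) ∩ π⁻¹(D)` for every admissible `F`.
Take `i` minimal with `D` inside the image of `λ_i`; then `i > 0` as `D ≠ 1`. If `D` lay in the
image of `μ_i`, then, `μ_i / λ_{i-1}` being soluble and `D` perfect, `D` would already lie in the
image of `λ_{i-1}`. Such an `i` exists because the upper nonsoluble series of a finite group
reaches the whole group: a minimal nontrivial subnormal subgroup is simple, so it lies in the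
soluble radical or in the generalized Fitting subgroup.
-/

universe u v

/-- A subgroup `H` of `G` is *subnormal* if there is a chain of subgroups
`H = C_0 ≤ C_1 ≤ … ≤ C_n = G` with each `C_i` normal in `C_{i+1}`. -/
def IsSubnormal {G : Type*} [Group G] (H : Subgroup G) : Prop :=
  ∃ (n : ℕ) (c : ℕ → Subgroup G), c 0 = H ∧ c n = ⊤ ∧
    ∀ i, i < n → c i ≤ c (i + 1) ∧ ((c i).subgroupOf (c (i + 1))).Normal

/-- A magma is nonabelian if some two elements do not commute. -/
def IsNonabelian (X : Type*) [Mul X] : Prop := ∃ a b : X, a * b ≠ b * a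

/-- A group is quasisimple if it is perfect and its central quotient is a
nonabelian simple group. -/
def IsQuasisimple (Q : Type*) [Group Q] : Prop :=
  commutator Q = ⊤ ∧ IsSimpleGroup (Q ⧸ Subgroup.center Q) ∧
    IsNonabelian (Q ⧸ Subgroup.center Q)

/-- The Fitting subgroup of a group: the subgroup generated by (for a finite group,
the product of) all nilpotent normal subgroups. -/
def fittingSubgroup (G : Type*) [Group G] : Subgroup G :=
  sSup {H : Subgroup G | H.Normal ∧ Group.IsNilpotent H}

/-- The generalized Fitting subgroup `F*(G)`: the product of the Fitting subgroup
and all subnormal quasisimple subgroups.  (The generating set below is closed under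
conjugation, so its normal closure coincides with the subgroup it generates.) -/
def genFitting (G : Type*) [Group G] : Subgroup G :=
  Subgroup.normalClosure
    ((fittingSubgroup G : Set G) ∪
      {x | ∃ Q : Subgroup G, IsSubnormal Q ∧ IsQuasisimple ↥Q ∧ x ∈ Q})

instance genFitting_normal (G : Type*) [Group G] : (genFitting G).Normal :=
  Subgroup.normalClosure_normal

/-- The soluble radical of a group: the subgroup generated by (for a finite group,
the largest of) all soluble normal subgroups. -/
def solubleRadical (G : Type*) [Group G] : Subgroup G :=
  Subgroup.normalClosure {x | ∃ H : Subgroup G, H.Normal ∧ IsSolvable ↥H ∧ x ∈ H}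

instance solubleRadical_normal (G : Type*) [Group G] : (solubleRadical G).Normal :=
  Subgroup.normalClosure_normal

/-- The generalized Fitting series, bundled with the proof of normality of its terms:
`F*_0(G) = ⊥` and `F*_{n+1}(G)` is the full preimage in `G` of `F*(G/F*_n(G))`. -/
def genFittingSeriesAux (G : Type u) [Group G] : ℕ → {H : Subgroup G // H.Normal}
  | 0 => ⟨⊥, inferInstance⟩
  | n + 1 =>
    let P := genFittingSeriesAux G n
    haveI := P.2
    ⟨(genFitting (G ⧸ P.1)).comap (QuotientGroup.mk' P.1),
      Subgroup.Normal.comap inferInstance _⟩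

/-- The generalized Fitting series of `G`: `F*_1(G) = F*(G)` and `F*_{n+1}(G)` is the
full preimage in `G` of `F*(G/F*_n(G))`. -/
def genFittingSeries (G : Type u) [Group G] (n : ℕ) : Subgroup G :=
  (genFittingSeriesAux G n).1

instance genFittingSeries_normal (G : Type u) [Group G] (n : ℕ) :
    (genFittingSeries G n).Normal :=
  (genFittingSeriesAux G n).2

/-- The generalized Fitting height `h*(G)`: the least `h` with `F*_h(G) = G`. -/
noncomputable def genFittingHeight (G : Type u) [Group G] : ℕ :=
  sInf {h : ℕ | genFittingSeries G h = ⊤}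

/-- The fixed-point subgroup `C_G(φ)` of an automorphism `φ` of `G`. -/
def autFixedSubgroup {G : Type*} [Group G] (φ : G ≃* G) : Subgroup G where
  carrier := {g | φ g = g}
  one_mem' := map_one φ
  mul_mem' := fun {a b} ha hb => by
    simp only [Set.mem_setOf_eq] at *; rw [map_mul, ha, hb]
  inv_mem' := fun {a} ha => by
    simp only [Set.mem_setOf_eq] at *; rw [map_inv, ha]

/-- The fixed-point subgroup `C_G(A)` of a group `A` acting on `G` by automorphisms
via `ρ : A →* MulAut G`. -/
def actionFixedSubgroup {A G : Type*} [Group A] [Group G] (ρ : A →* MulAut G) :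
    Subgroup G where
  carrier := {g | ∀ a : A, ρ a g = g}
  one_mem' := fun a => map_one (ρ a)
  mul_mem' := fun {x y} hx hy a => by
    rw [map_mul, hx a, hy a]
  inv_mem' := fun {x} hx a => by
    rw [map_inv, hx a]

/-- The subgroup `[G, φ]` generated by all `g⁻¹ * φ(g)`. -/
def autCommutator {G : Type*} [Group G] (φ : G ≃* G) : Subgroup G :=
  Subgroup.closure {x | ∃ g : G, x = g⁻¹ * φ g}

/-- `X` is a (nonempty) direct product of nonabelian simple groups. -/
def IsNonabelianSimpleProduct (X : Type*) [Group X] : Prop :=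
  ∃ (ι : Type) (f : ι → Type) (inst : ∀ i : ι, Group (f i)),
    Nonempty ι ∧
    (∀ i : ι, letI := inst i
      IsSimpleGroup (f i) ∧ IsNonabelian (f i)) ∧
    (letI : ∀ i : ι, Group (f i) := inst
     Nonempty (X ≃* ∀ i : ι, f i))

/-- For subgroups `A ≤ B` of `G` with `A` normalized by `B`, the factor group `B/A`
is soluble; expressed via a surjective homomorphism with kernel `A` (viewed in `B`). -/
def FactorSolvable {G : Type u} [Group G] (A B : Subgroup G) : Prop :=
  ∃ (X : Type u) (inst : Group X),
    letI := inst
    ∃ f : ↥B →* X, Function.Surjective f ∧ f.ker = A.subgroupOf B ∧ IsSolvable X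

/-- For subgroups `A ≤ B` of `G` with `A` normalized by `B`, the factor group `B/A`
is a (nonempty) direct product of nonabelian simple groups. -/
def FactorNonabelianSimpleProduct {G : Type u} [Group G] (A B : Subgroup G) : Prop :=
  ∃ (X : Type u) (inst : Group X),
    letI := inst
    ∃ f : ↥B →* X, Function.Surjective f ∧ f.ker = A.subgroupOf B ∧
      IsNonabelianSimpleProduct X

/-- The nonsoluble length `λ(G)`: the minimum `h` such that `G` has a normal series
`1 = G_0 ≤ G_1 ≤ … ≤ G_{2h+1} = G` in which for `i` even the factor `G_{i+1}/G_i` is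
soluble (possibly trivial), and for `i` odd the factor `G_{i+1}/G_i` is a (nonempty)
direct product of nonabelian simple groups. -/
noncomputable def nonsolubleLength (G : Type u) [Group G] : ℕ :=
  sInf {h : ℕ | ∃ c : ℕ → Subgroup G,
    c 0 = ⊥ ∧ c (2 * h + 1) = ⊤ ∧ (∀ i, (c i).Normal) ∧ (∀ i, c i ≤ c (i + 1)) ∧
    (∀ i < 2 * h + 1, Even i → FactorSolvable (c i) (c (i + 1))) ∧
    (∀ i < 2 * h + 1, ¬ Even i → FactorNonabelianSimpleProduct (c i) (c (i + 1)))}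

/-- The upper nonsoluble series of `G`, bundled with normality: the value at `n` is the
pair `(M_n, L_n)`, where `M_{n+1}` is the full preimage in `G` of the soluble radical of
`G/L_n` and `L_{n+1}` is the full preimage in `G` of `F*(G/M_{n+1})`; here `L_0 = ⊥`
(and `M_0 = ⊥` is a dummy value). -/
def upperNSAux (G : Type u) [Group G] :
    ℕ → {H : Subgroup G // H.Normal} × {H : Subgroup G // H.Normal}
  | 0 => (⟨⊥, inferInstance⟩, ⟨⊥, inferInstance⟩)
  | n + 1 =>
    let Lp := (upperNSAux G n).2
    haveI := Lp.2
    let M : {H : Subgroup G // H.Normal} :=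
      ⟨(solubleRadical (G ⧸ Lp.1)).comap (QuotientGroup.mk' Lp.1),
        Subgroup.Normal.comap inferInstance _⟩
    haveI := M.2
    (M, ⟨(genFitting (G ⧸ M.1)).comap (QuotientGroup.mk' M.1),
      Subgroup.Normal.comap inferInstance _⟩)

/-- The term `M_k` of the upper nonsoluble series (for `k ≥ 1`); `M_1` is the soluble
radical of `G`. -/
def upperM (G : Type u) [Group G] (k : ℕ) : Subgroup G := (upperNSAux G k).1.1

/-- The term `L_k` of the upper nonsoluble series; `L_0 = ⊥` and `L_k` is the full
preimage in `G` of `F*(G/M_k)`. -/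
def upperL (G : Type u) [Group G] (k : ℕ) : Subgroup G := (upperNSAux G k).2.1

instance upperM_normal (G : Type u) [Group G] (k : ℕ) : (upperM G k).Normal :=
  (upperNSAux G k).1.2

instance upperL_normal (G : Type u) [Group G] (k : ℕ) : (upperL G k).Normal :=
  (upperNSAux G k).2.2

/-- The kernel of the conjugation action of a group `H` permuting its subnormal
nonabelian simple subgroups. -/
def simplePermKernel (H : Type u) [Group H] : Subgroup H where
  carrier := {g | ∀ T : Subgroup H, IsSubnormal T → IsSimpleGroup ↥T → IsNonabelian ↥T →
    T.map (MulAut.conj g).toMonoidHom = T}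
  one_mem' := by
    intro T _ _ _
    have h1 : (MulAut.conj (1 : H)).toMonoidHom = MonoidHom.id H := by
      ext x; simp
    rw [h1, Subgroup.map_id]
  mul_mem' := by
    intro a b ha hb T h1 h2 h3
    have hab : (MulAut.conj (a * b)).toMonoidHom =
        (MulAut.conj a).toMonoidHom.comp (MulAut.conj b).toMonoidHom := by
      ext x; simp [mul_assoc]
    rw [hab, ← Subgroup.map_map, hb T h1 h2 h3, ha T h1 h2 h3]
  inv_mem' := by
    intro a ha T h1 h2 h3
    have h := ha T h1 h2 h3
    have hcomp : (MulAut.conj a⁻¹).toMonoidHom.comp (MulAut.conj a).toMonoidHom =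
        MonoidHom.id H := by
      ext x; simp; group
    calc T.map (MulAut.conj a⁻¹).toMonoidHom
        = (T.map (MulAut.conj a).toMonoidHom).map (MulAut.conj a⁻¹).toMonoidHom := by
          rw [h]
      _ = T.map ((MulAut.conj a⁻¹).toMonoidHom.comp (MulAut.conj a).toMonoidHom) :=
          Subgroup.map_map _ _ _
      _ = T := by rw [hcomp, Subgroup.map_id]

section Subnormal

variable {G : Type*} [Group G]

theorem isSubnormal_iff_subgroup_isSubnormal {H : Subgroup G} :
    IsSubnormal H ↔ H.IsSubnormal := by
  constructor
  · rintro ⟨n, c, rfl, hn, hc⟩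
    suffices ∀ m ≤ n, (c (n - m)).IsSubnormal by simpa using this n le_rfl
    intro m
    induction m with
    | zero => intro _; simp [hn]
    | succ m ih =>
      intro hm
      have hstep := hc (n - (m + 1)) (by omega)
      rw [show n - (m + 1) + 1 = n - m by omega] at hstep
      exact .step _ _ hstep.1 (ih (by omega)) hstep.2
  · intro h
    obtain ⟨n, f, hmono, hnorm, h0, hn⟩ := Subgroup.IsSubnormal.isSubnormal_iff.mp h
    exact ⟨n, f, h0, hn, fun i _ => ⟨hmono (Nat.le_succ i), hnorm i⟩⟩

namespace Subgroup

variable {S H K N : Subgroup G}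

theorem commutator_inf_eq_bot_of_le_normalizer (hS : ⁅S, S⁆ = S) (hSH : S ≤ H)
    (hK : K ≤ normalizer (H : Set G)) (hSN : S ≤ normalizer (N : Set G))
    (h : ⁅S, N ⊓ H⁆ = ⊥) : ⁅S, N ⊓ K⁆ = ⊥ := by
  have hle : ⁅S, N ⊓ K⁆ ≤ N ⊓ H := by
    refine commutator_le.mpr fun s hs m hm => ?_
    obtain ⟨hmN, hmK⟩ := mem_inf.mp hm
    refine mem_inf.mpr ⟨?_, ?_⟩
    · rw [commutatorElement_def]
      exact mul_mem ((mem_normalizer_iff.mp (hSN hs) m).mp hmN) (inv_mem hmN)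
    · have hs' : s⁻¹ ∈ H := inv_mem (hSH hs)
      rw [commutatorElement_def, mul_assoc, mul_assoc, ← mul_assoc m]
      exact mul_mem (hSH hs) ((mem_normalizer_iff.mp (hK hmK) _).mp hs')
  have h1 : ⁅⁅S, N ⊓ K⁆, S⁆ = ⊥ :=
    le_bot_iff.mp ((commutator_mono hle le_rfl).trans (commutator_comm S (N ⊓ H) ▸ h).le)
  have h2 : ⁅⁅N ⊓ K, S⁆, S⁆ = ⊥ := by rwa [commutator_comm (N ⊓ K)]
  simpa [hS] using commutator_commutator_eq_bot_of_rotate h1 h2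

namespace IsSubnormal

theorem commutator_eq_bot_of_commutator_inf (hH : H.IsSubnormal) (hS : ⁅S, S⁆ = S)
    (hSH : S ≤ H) (hSN : S ≤ normalizer (N : Set G)) (h : ⁅S, N ⊓ H⁆ = ⊥) : ⁅S, N⁆ = ⊥ := by
  induction hH with
  | top => simpa using h
  | step H K hHK _ hHn ih =>
    exact ih (hSH.trans hHK) <| commutator_inf_eq_bot_of_le_normalizer hS hSH
      ((normal_subgroupOf_iff_le_normalizer hHK).mp hHn) hSN h

theorem le_or_commutator_eq_bot_of_le_normalizer (hS : S.IsSubnormal)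
    [IsSimpleGroup S] (hperf : ⁅S, S⁆ = S) (hSN : S ≤ normalizer (N : Set G)) :
    S ≤ N ∨ ⁅S, N⁆ = ⊥ := by
  rcases (normal_subgroupOf_of_le_normalizer hSN).eq_bot_or_eq_top with h | h
  · refine .inr (hS.commutator_eq_bot_of_commutator_inf hperf le_rfl hSN ?_)
    rw [disjoint_iff.mp (subgroupOf_eq_bot.mp h), commutator_bot_right]
  · exact .inl (subgroupOf_eq_top.mp h)

theorem le_or_commutator_eq_bot (hS : S.IsSubnormal) [IsSimpleGroup S]
    (hperf : ⁅S, S⁆ = S) (hK : K.IsSubnormal) : S ≤ K ∨ ⁅S, K⁆ = ⊥ := by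
  induction hK with
  | top => exact .inl le_top
  | step H K hHK _ hHn ih =>
    rcases ih with hSK | hSK
    · exact hS.le_or_commutator_eq_bot_of_le_normalizer hperf
        (hSK.trans ((normal_subgroupOf_iff_le_normalizer hHK).mp hHn))
    · exact .inr (le_bot_iff.mp (hSK ▸ commutator_mono le_rfl hHK))

theorem commutator_eq_bot_of_ne {T : Subgroup G} (hS : S.IsSubnormal) (hT : T.IsSubnormal)
    [IsSimpleGroup S] [IsSimpleGroup T] (hperf : ⁅S, S⁆ = S) (hST : S ≠ T) : ⁅S, T⁆ = ⊥ := by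
  refine (hS.le_or_commutator_eq_bot hperf hT).resolve_left fun hle => hST ?_
  rcases hS.subgroupOf.eq_bot_or_top_of_isSimpleGroup (H := S.subgroupOf T) ‹_› with h | h
  · have := (subgroupOf_eq_bot.mp h).eq_bot_of_le hle
    exact absurd this ((nontrivial_iff_ne_bot S).mp inferInstance)
  · exact le_antisymm hle (subgroupOf_eq_top.mp h)

end IsSubnormal

end Subgroup

end Subnormal

section NonabelianSimple

variable {G X : Type*} [Group G] [Group X]

theorem IsNonabelian.center_eq_bot [IsSimpleGroup X] (h : IsNonabelian X) :
    Subgroup.center X = ⊥ := by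
  refine (Subgroup.normal_of_characteristic _).eq_bot_or_eq_top.resolve_right fun htop => ?_
  obtain ⟨a, b, hab⟩ := h
  exact hab (Subgroup.mem_center_iff.mp (htop ▸ Subgroup.mem_top b) a)

theorem IsNonabelian.commutator_eq_top [IsSimpleGroup X] (h : IsNonabelian X) :
    commutator X = ⊤ := by
  refine (Subgroup.commutator_normal (⊤ : Subgroup X) ⊤).eq_bot_or_eq_top.resolve_left
    fun hbot => ?_
  obtain ⟨a, b, hab⟩ := h
  have := Subgroup.commutator_mem_commutator (Subgroup.mem_top a) (Subgroup.mem_top b)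
  rw [hbot, Subgroup.mem_bot, commutatorElement_eq_one_iff_mul_comm] at this
  exact hab this

theorem IsNonabelian.of_mulEquiv {Y : Type*} [Group Y] (e : X ≃* Y) (h : IsNonabelian X) :
    IsNonabelian Y := by
  obtain ⟨a, b, hab⟩ := h
  exact ⟨e a, e b, by rwa [← map_mul, ← map_mul, e.injective.ne_iff]⟩

theorem IsNonabelian.isQuasisimple [IsSimpleGroup X] (h : IsNonabelian X) : IsQuasisimple X := by
  let e : X ⧸ Subgroup.center X ≃* X :=
    (QuotientGroup.quotientMulEquivOfEq h.center_eq_bot).trans QuotientGroup.quotientBot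
  exact ⟨h.commutator_eq_top, e.isSimpleGroup, h.of_mulEquiv e.symm⟩

theorem MonoidHom.commutator_range_eq_range (f : X →* G) (h : commutator X = ⊤) :
    ⁅f.range, f.range⁆ = f.range := by
  rw [f.range_eq_map, ← Subgroup.map_commutator, ← commutator_def, h]

theorem IsNonabelian.commutator_subgroup_eq_self {S : Subgroup G} [IsSimpleGroup S]
    (h : IsNonabelian S) : ⁅S, S⁆ = S := by
  simpa using S.subtype.commutator_range_eq_range h.commutator_eq_top

theorem pairwise_commute_of_isSubnormal {ι : Type*} {s : ι → Subgroup G}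
    (hfac : ∀ i, IsSubnormal (s i) ∧ IsSimpleGroup (s i) ∧ IsNonabelian (s i))
    (hinj : Function.Injective s) :
    Pairwise fun i j => ∀ x y, x ∈ s i → y ∈ s j → Commute x y := by
  intro i j hij x y hx hy
  have := (hfac i).2.1
  have := (hfac j).2.1
  have h := Subgroup.IsSubnormal.commutator_eq_bot_of_ne
    (isSubnormal_iff_subgroup_isSubnormal.mp (hfac i).1)
    (isSubnormal_iff_subgroup_isSubnormal.mp (hfac j).1)
    (hfac i).2.2.commutator_subgroup_eq_self (hinj.ne hij)
  exact (Subgroup.mem_centralizer_iff.mp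
    (Subgroup.commutator_eq_bot_iff_le_centralizer.mp h hx) y hy).symm

end NonabelianSimple

section SolubleRadical

variable {G H : Type*} [Group G] [Group H]

theorem le_solubleRadical {N : Subgroup G} (hN : N.Normal) (hs : Group.IsSolvable N) :
    N ≤ solubleRadical G :=
  fun _ hx => Subgroup.subset_normalClosure ⟨N, hN, hs, hx⟩

theorem map_solubleRadical_le {f : G →* H} (hf : Function.Surjective f) :
    (solubleRadical G).map f ≤ solubleRadical H := by
  rw [solubleRadical, Subgroup.map_normalClosure _ _ hf]
  refine Subgroup.normalClosure_mono ?_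
  rintro _ ⟨x, ⟨N, hN, hs, hx⟩, rfl⟩
  have : Group.IsSolvable N := hs
  exact ⟨N.map f, hN.map f hf, Group.isSolvable_of_surjective (f.subgroupMap_surjective N),
    Subgroup.mem_map_of_mem f hx⟩

instance solubleRadical_characteristic : (solubleRadical G).Characteristic :=
  Subgroup.characteristic_iff_map_le.mpr fun ϕ => map_solubleRadical_le ϕ.surjective

theorem isSolvable_sup {N K : Subgroup G} [N.Normal] [Group.IsSolvable N] [Group.IsSolvable K] :
    Group.IsSolvable ↥(N ⊔ K) := by
  let g := (QuotientGroup.mk' N).comp (N ⊔ K).subtype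
  have hg : g.range = K.map (QuotientGroup.mk' N) := by
    rw [MonoidHom.range_comp, Subgroup.range_subtype, Subgroup.map_sup,
      QuotientGroup.map_mk'_self, bot_sup_eq]
  have : Group.IsSolvable g.range :=
    hg ▸ Group.isSolvable_of_surjective ((QuotientGroup.mk' N).subgroupMap_surjective K)
  refine Group.isSolvable_of_ker_le_range (Subgroup.inclusion le_sup_left) g.rangeRestrict
    fun x hx => ?_
  rw [MonoidHom.ker_rangeRestrict, MonoidHom.mem_ker] at hx
  exact ⟨⟨x, (QuotientGroup.eq_one_iff _).mp hx⟩, rfl⟩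

theorem isSolvable_solubleRadical [Finite G] : Group.IsSolvable (solubleRadical G) := by
  let 𝒮 : Set (Subgroup G) := {N | N.Normal ∧ Group.IsSolvable N}
  have hsup : SupClosed 𝒮 := by
    rintro N ⟨hN, hNs⟩ K ⟨hK, hKs⟩
    exact ⟨Subgroup.sup_normal N K, isSolvable_sup⟩
  have hmem : sSup 𝒮 ∈ 𝒮 :=
    hsup.sSup_mem (Set.toFinite 𝒮) ⟨Subgroup.normal_bot, inferInstance⟩ subset_rfl
  have hle : solubleRadical G ≤ sSup 𝒮 := by
    have := hmem.1
    refine Subgroup.normalClosure_le_normal ?_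
    rintro x ⟨N, hN, hs, hx⟩
    exact le_sSup (show N ∈ 𝒮 from ⟨hN, hs⟩) hx
  have := hmem.2
  exact Group.isSolvable_of_isSolvable_injective (Subgroup.inclusion_injective hle)

theorem le_map_subtype_solubleRadical {X K : Subgroup G} (hXK : X ≤ K)
    (hKX : K ≤ Subgroup.normalizer (X : Set G)) (hX : Group.IsSolvable X) :
    X ≤ (solubleRadical K).map K.subtype := by
  have hs : Group.IsSolvable (X.subgroupOf K) :=
    Group.isSolvable_of_isSolvable_injective (f := (Subgroup.subgroupOfEquivOfLe hXK).toMonoidHom)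
      (Subgroup.subgroupOfEquivOfLe hXK).injective
  rw [← Subgroup.map_subgroupOf_eq_of_le hXK]
  exact Subgroup.map_mono (le_solubleRadical (Subgroup.normal_subgroupOf_of_le_normalizer hKX) hs)

theorem Subgroup.normalizer_le_normalizer_map_subtype {K : Subgroup G} (C : Subgroup K)
    [C.Characteristic] :
    normalizer (K : Set G) ≤ normalizer (C.map K.subtype : Set G) := by
  intro g hg
  rw [mem_normalizer_iff_map_conj_eq, map_map]
  have : (MulAut.conj g : G →* G).comp K.subtype =
      K.subtype.comp (K.normalizerMonoidHom ⟨g, hg⟩).toMonoidHom := rfl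
  rw [this, ← map_map, characteristic_iff_map_eq.mp ‹_›]

theorem Subgroup.IsSubnormal.le_solubleRadical [Finite G] {T : Subgroup G} (hT : T.IsSubnormal)
    (hs : Group.IsSolvable T) : T ≤ solubleRadical G := by
  suffices ∀ X : Subgroup G, X ≤ T → T ≤ normalizer (X : Set G) → Group.IsSolvable X →
      X ≤ solubleRadical G from this T le_rfl T.le_normalizer hs
  clear hs
  induction hT with
  | top =>
    intro X _ hX hXs
    exact _root_.le_solubleRadical (normalizer_eq_top_iff.mp (top_le_iff.mp hX)) hXs
  | step H K hHK _ hHn ih =>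
    intro X hXH hHX hXs
    refine (le_map_subtype_solubleRadical hXH hHX hXs).trans (ih _ ?_ ?_ ?_)
    · exact (map_subtype_le _).trans hHK
    · exact ((normal_subgroupOf_iff_le_normalizer hHK).mp hHn).trans
        (normalizer_le_normalizer_map_subtype _)
    · have := isSolvable_solubleRadical (G := H)
      exact Group.isSolvable_of_surjective (H.subtype.subgroupMap_surjective _)

end SolubleRadical

section TrivialRadicals

variable {G : Type*} [Group G]

theorem le_genFitting {Q : Subgroup G} (hQ : IsSubnormal Q) (hq : IsQuasisimple Q) :
    Q ≤ genFitting G :=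
  fun _ hx => Subgroup.subset_normalClosure (Or.inr ⟨Q, hQ, hq, hx⟩)

theorem isSimpleGroup_of_minimal_isSubnormal {T : Subgroup G}
    (hT : Minimal (fun T : Subgroup G => T.IsSubnormal ∧ T ≠ ⊥) T) : IsSimpleGroup T := by
  have : Nontrivial T := (Subgroup.nontrivial_iff_ne_bot T).mpr hT.prop.2
  refine ⟨fun N hN => or_iff_not_imp_left.mpr fun hNbot => ?_⟩
  have hmin := hT.le_of_le ⟨hN.isSubnormal.trans' hT.prop.1,
    (Subgroup.map_eq_bot_iff_of_injective _ T.subtype_injective).not.mpr hNbot⟩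
    (Subgroup.map_subtype_le N)
  rwa [eq_top_iff, ← Subgroup.map_subtype_le_map_subtype, ← MonoidHom.range_eq_map,
    Subgroup.range_subtype]

theorem subsingleton_of_solubleRadical_eq_bot_of_genFitting_eq_bot [Finite G]
    (hR : solubleRadical G = ⊥) (hF : genFitting G = ⊥) : Subsingleton G := by
  by_contra hG
  rw [not_subsingleton_iff_nontrivial] at hG
  obtain ⟨T, hT⟩ := (Set.toFinite {T : Subgroup G | T.IsSubnormal ∧ T ≠ ⊥}).exists_minimal
    ⟨⊤, Subgroup.IsSubnormal.top, top_ne_bot⟩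
  have := isSimpleGroup_of_minimal_isSubnormal hT
  refine hT.prop.2 (le_bot_iff.mp ?_)
  by_cases hna : IsNonabelian T
  · exact hF ▸ le_genFitting (isSubnormal_iff_subgroup_isSubnormal.mpr hT.prop.1)
      hna.isQuasisimple
  · refine hR ▸ hT.prop.1.le_solubleRadical (Group.isSolvable_of_comm fun a b => ?_)
    by_contra hab
    exact hna ⟨a, b, hab⟩

end TrivialRadicals

section UpperSeries

variable {G : Type u} [Group G]

theorem upperL_zero : upperL G 0 = ⊥ := rfl

theorem upperM_succ (n : ℕ) : upperM G (n + 1) =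
    (solubleRadical (G ⧸ upperL G n)).comap (QuotientGroup.mk' (upperL G n)) := rfl

theorem upperL_succ (n : ℕ) : upperL G (n + 1) =
    (genFitting (G ⧸ upperM G (n + 1))).comap (QuotientGroup.mk' (upperM G (n + 1))) := rfl

theorem upperL_le_upperM_succ (n : ℕ) : upperL G n ≤ upperM G (n + 1) := by
  rw [upperM_succ]
  exact (QuotientGroup.ker_mk' (upperL G n)).ge.trans (Subgroup.ker_le_comap _ _)

theorem upperM_le_upperL (n : ℕ) : upperM G (n + 1) ≤ upperL G (n + 1) := by
  rw [upperL_succ]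
  exact (QuotientGroup.ker_mk' _).ge.trans (Subgroup.ker_le_comap _ _)

theorem monotone_upperL : Monotone (upperL G) :=
  monotone_nat_of_le_succ fun n => (upperL_le_upperM_succ n).trans (upperM_le_upperL n)

theorem eq_top_of_comap_solubleRadical_le_of_comap_genFitting_le [Finite G] {N : Subgroup G}
    [N.Normal] (hR : (solubleRadical (G ⧸ N)).comap (QuotientGroup.mk' N) ≤ N)
    (hF : (genFitting (G ⧸ N)).comap (QuotientGroup.mk' N) ≤ N) : N = ⊤ := by
  have hbot {X : Subgroup (G ⧸ N)} (hX : X.comap (QuotientGroup.mk' N) ≤ N) : X = ⊥ := by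
    have := Subgroup.map_mono (f := QuotientGroup.mk' N) hX
    rwa [Subgroup.map_comap_eq_self_of_surjective (QuotientGroup.mk'_surjective N),
      QuotientGroup.map_mk'_self, le_bot_iff] at this
  have := subsingleton_of_solubleRadical_eq_bot_of_genFitting_eq_bot (hbot hR) (hbot hF)
  exact QuotientGroup.subsingleton_iff.mp this

-- `G ⧸ N` depends on the instance `N.Normal`, so `rw` cannot replace `N` by an equal subgroup.
theorem comap_solubleRadical_congr {N₁ N₂ : Subgroup G} [N₁.Normal] [N₂.Normal] (h : N₁ = N₂) :
    (solubleRadical (G ⧸ N₁)).comap (QuotientGroup.mk' N₁) =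
      (solubleRadical (G ⧸ N₂)).comap (QuotientGroup.mk' N₂) := by
  subst h; rfl

theorem exists_upperL_eq_top [Finite G] : ∃ n, upperL G n = ⊤ := by
  obtain ⟨n, hn⟩ := WellFoundedGT.monotone_chain_condition ⟨upperL G, monotone_upperL⟩
  have hL : upperL G (n + 1) = upperL G n := (hn (n + 1) n.le_succ).symm
  have hML : upperM G (n + 1) = upperL G n :=
    le_antisymm (hL ▸ upperM_le_upperL n) (upperL_le_upperM_succ n)
  refine ⟨n, hML ▸ eq_top_of_comap_solubleRadical_le_of_comap_genFitting_le ?_ ?_⟩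
  · exact ((comap_solubleRadical_congr hML).trans (upperM_succ n).symm).le
  · exact ((upperL_succ n).symm.trans (hL.trans hML.symm)).le

end UpperSeries

section DerivedSeriesOf

variable {G Q : Type*} [Group G] [Group Q]

def derivedSeriesOf (H : Subgroup G) : ℕ → Subgroup G
  | 0 => H
  | n + 1 => ⁅derivedSeriesOf H n, derivedSeriesOf H n⁆

theorem map_derivedSeriesOf (f : G →* Q) (H : Subgroup G) (n : ℕ) :
    (derivedSeriesOf H n).map f = derivedSeriesOf (H.map f) n := by
  induction n with
  | zero => rfl
  | succ n ih => rw [derivedSeriesOf, derivedSeriesOf, Subgroup.map_commutator, ih]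

theorem derivedSeriesOf_mono {H K : Subgroup G} (h : H ≤ K) (n : ℕ) :
    derivedSeriesOf H n ≤ derivedSeriesOf K n := by
  induction n with
  | zero => exact h
  | succ n ih => exact Subgroup.commutator_mono ih ih

theorem derivedSeriesOf_of_commutator_eq_self {H : Subgroup G} (h : ⁅H, H⁆ = H) (n : ℕ) :
    derivedSeriesOf H n = H := by
  induction n with
  | zero => rfl
  | succ n ih => rw [derivedSeriesOf, ih, h]

theorem derivedSeriesOf_le (H : Subgroup G) (n : ℕ) : derivedSeriesOf H n ≤ H := by
  induction n with
  | zero => exact le_rfl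
  | succ n ih =>
    refine Subgroup.commutator_le.mpr fun a ha b hb => ih ?_
    rw [commutatorElement_def]
    exact mul_mem (mul_mem (mul_mem ha hb) (inv_mem ha)) (inv_mem hb)

theorem map_subtype_derivedSeries (H : Subgroup G) (n : ℕ) :
    (derivedSeries H n).map H.subtype = derivedSeriesOf H n := by
  induction n with
  | zero => rw [derivedSeries_zero, ← MonoidHom.range_eq_map, Subgroup.range_subtype]; rfl
  | succ n ih => rw [derivedSeries_succ, Subgroup.map_commutator, ih]; rfl

theorem exists_derivedSeriesOf_eq_bot {H : Subgroup G} [h : Group.IsSolvable H] :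
    ∃ n, derivedSeriesOf H n = ⊥ := by
  obtain ⟨n, hn⟩ := h
  exact ⟨n, by rw [← map_subtype_derivedSeries, hn, Subgroup.map_bot]⟩

theorem le_map_inf_ker_of_commutator_eq_self {X : Type*} [Group X] (f : G →* X) (q : G →* Q)
    {R : Subgroup G} {D : Subgroup X} (hD : ⁅D, D⁆ = D) (hDR : D ≤ R.map f)
    (hR : Group.IsSolvable (R.map q)) : D ≤ (R ⊓ q.ker).map f := by
  obtain ⟨n, hn⟩ := exists_derivedSeriesOf_eq_bot (H := R.map q)
  let Y := R ⊓ D.comap f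
  have hY : Y.map f = D := by
    refine le_antisymm (Subgroup.map_le_iff_le_comap.mpr inf_le_right) fun d hd => ?_
    obtain ⟨g, hg, rfl⟩ := hDR hd
    exact ⟨g, ⟨hg, hd⟩, rfl⟩
  have hker : derivedSeriesOf Y n ≤ q.ker := by
    rw [← Subgroup.map_eq_bot_iff, map_derivedSeriesOf, ← le_bot_iff, ← hn]
    exact derivedSeriesOf_mono (Subgroup.map_mono inf_le_left) n
  calc D = (derivedSeriesOf Y n).map f := by
        rw [map_derivedSeriesOf, hY, derivedSeriesOf_of_commutator_eq_self hD]
    _ ≤ (R ⊓ q.ker).map f :=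
        Subgroup.map_mono (le_inf ((derivedSeriesOf_le Y n).trans inf_le_left) hker)

end DerivedSeriesOf

theorem exists_le_map_upperL_not_le_map_upperM {G : Type u} {X : Type*} [Group G] [Finite G]
    [Group X] (f : G →* X) {D : Subgroup X} (hD : D ≠ ⊥) (hDD : ⁅D, D⁆ = D) (hDf : D ≤ f.range) :
    ∃ i, D ≤ (upperL G i).map f ∧ ¬ D ≤ (upperM G i).map f := by
  classical
  have hex : ∃ n, D ≤ (upperL G n).map f := by
    obtain ⟨n, hn⟩ := exists_upperL_eq_top (G := G)
    exact ⟨n, by rwa [hn, ← MonoidHom.range_eq_map]⟩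
  obtain ⟨j, hj⟩ : ∃ j, Nat.find hex = j + 1 := by
    refine Nat.exists_eq_succ_of_ne_zero fun h0 => hD (le_bot_iff.mp ?_)
    simpa [h0, upperL_zero] using Nat.find_spec hex
  refine ⟨j + 1, hj ▸ Nat.find_spec hex, fun hM => Nat.find_min hex (hj ▸ j.lt_add_one) ?_⟩
  have hsol : Group.IsSolvable ((upperM G (j + 1)).map (QuotientGroup.mk' (upperL G j))) := by
    rw [upperM_succ, Subgroup.map_comap_eq_self_of_surjective (QuotientGroup.mk'_surjective _)]
    exact isSolvable_solubleRadical
  refine (le_map_inf_ker_of_commutator_eq_self f _ hDD hM hsol).trans (Subgroup.map_mono ?_)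
  exact inf_le_right.trans (QuotientGroup.ker_mk' _).le

section CoprimeLifting

theorem Equiv.Perm.exists_mem_fixed_of_not_dvd {α : Type*} {p : ℕ} [Fact p.Prime]
    {σ : Equiv.Perm α} (hσ : σ ^ p = 1) {Ω : Set α} (hfin : Ω.Finite)
    (hΩ : ∀ x, σ x ∈ Ω ↔ x ∈ Ω) (hp : ¬ p ∣ Ω.ncard) : ∃ x ∈ Ω, σ x = x := by
  have := hfin.fintype
  have hcard : ¬ p ∣ Fintype.card Ω := by rwa [← Nat.card_eq_fintype_card, Nat.card_coe_set_eq]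
  obtain ⟨x, hx⟩ := Equiv.Perm.exists_fixed_point_of_prime (n := 1) hcard
    (σ := σ.subtypePerm hΩ) (by rw [pow_one, Equiv.Perm.subtypePerm_pow]; ext x; simp [hσ])
  exact ⟨x, x.2, congrArg Subtype.val hx⟩

variable {G Q : Type*} [Group G] [Group Q] [Finite G] {p : ℕ} [Fact p.Prime]
  {φ : MulAut G} {ψ : MulAut Q} {π : G →* Q}

/-- The fibre of `π` over `d` inside `F` is a coset of `F ⊓ ker π`, so its size is prime to `p`
and the `φ`-action on it has a fixed point. -/
theorem exists_fixed_mem_fibre (hcop : p.Coprime (Nat.card G)) (hφ : φ ^ p = 1)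
    (hψ : ∀ g, ψ (π g) = π (φ g)) {F : Subgroup G} (hF : F.map φ.toMonoidHom = F) {d : Q}
    (hd : ψ d = d) (hdF : d ∈ F.map π) : ∃ g ∈ F, φ g = g ∧ π g = d := by
  obtain ⟨f, hf, rfl⟩ := Subgroup.mem_map.mp hdF
  let Ω : Set G := {g | g ∈ F ∧ π g = π f}
  have hΩ : ∀ g, φ g ∈ Ω ↔ g ∈ Ω := fun g => by
    refine and_congr ?_ ⟨fun h => ψ.injective (by rw [hψ, h, hd]), fun h => by rw [← hψ, h, hd]⟩
    conv_lhs => rw [← hF]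
    rw [Subgroup.mem_map_equiv, MulEquiv.symm_apply_apply]
  have hΩ_eq : Ω = (f * ·) '' ((F ⊓ π.ker : Subgroup G) : Set G) := by
    ext g
    constructor
    · rintro ⟨hg, hπ⟩
      exact ⟨f⁻¹ * g, Subgroup.mem_inf.mpr ⟨F.mul_mem (F.inv_mem hf) hg, by simp [hπ]⟩, by simp⟩
    · rintro ⟨k, ⟨hkF, hk⟩, rfl⟩
      exact ⟨F.mul_mem hf hkF, by simp [MonoidHom.mem_ker.mp hk]⟩
  have hcard : Ω.ncard = Nat.card (F ⊓ π.ker : Subgroup G) := by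
    rw [hΩ_eq, Set.ncard_image_of_injective _ (mul_right_injective f)]
    exact (Nat.card_coe_set_eq _).symm
  have hndvd : ¬ p ∣ Ω.ncard := fun hdvd =>
    (Nat.Prime.coprime_iff_not_dvd Fact.out).mp hcop
      (hdvd.trans (hcard ▸ Subgroup.card_subgroup_dvd_card _))
  obtain ⟨g, ⟨hgF, hg⟩, hfix⟩ :=
    Equiv.Perm.exists_mem_fixed_of_not_dvd (σ := MulAut.toPerm G φ)
      (by rw [← map_pow, hφ, map_one]) (Set.toFinite Ω) hΩ hndvd
  exact ⟨g, hgF, hfix, hg⟩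

theorem map_inf_autFixedSubgroup_inf_comap_eq (hcop : p.Coprime (Nat.card G)) (hφ : φ ^ p = 1)
    (hψ : ∀ g, ψ (π g) = π (φ g)) {F : Subgroup G} (hF : F.map φ.toMonoidHom = F)
    {D : Subgroup Q} (hDψ : D ≤ autFixedSubgroup ψ) (hDF : D ≤ F.map π) :
    (F ⊓ autFixedSubgroup φ ⊓ D.comap π).map π = D := by
  refine le_antisymm (Subgroup.map_le_iff_le_comap.mpr inf_le_right) fun d hd => ?_
  obtain ⟨g, hgF, hfix, rfl⟩ := exists_fixed_mem_fibre hcop hφ hψ hF (hDψ hd) (hDF hd)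
  exact ⟨g, ⟨⟨hgF, hfix⟩, hd⟩, rfl⟩

theorem le_map_autFixedSubgroup (hcop : p.Coprime (Nat.card G)) (hφ : φ ^ p = 1)
    (hψ : ∀ g, ψ (π g) = π (φ g)) (hπ : Function.Surjective π) {D : Subgroup Q}
    (hDψ : D ≤ autFixedSubgroup ψ) : D ≤ (autFixedSubgroup φ).map π := by
  have := map_inf_autFixedSubgroup_inf_comap_eq hcop hφ hψ
    (Subgroup.map_top_of_surjective _ φ.surjective) hDψ
    (by rw [Subgroup.map_top_of_surjective _ hπ]; exact le_top)
  exact this.symm.le.trans (Subgroup.map_mono (inf_le_left.trans inf_le_right))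

end CoprimeLifting

section Diagonal

variable {H : Type*} [Group H]

theorem iSupIndep_of_commute_of_center_eq_bot {ι : Type*} {s : ι → Subgroup H}
    (hcomm : Pairwise fun i j => ∀ x y, x ∈ s i → y ∈ s j → Commute x y)
    (hZ : ∀ i, Subgroup.center (s i) = ⊥) : iSupIndep s := by
  intro i
  rw [disjoint_iff_inf_le]
  rintro x ⟨hxi, hx⟩
  have hcen : (⨆ (j) (_ : j ≠ i), s j) ≤ Subgroup.centralizer (s i : Set H) :=
    iSup₂_le fun j hj y hy => Subgroup.mem_centralizer_iff.mpr fun z hz => hcomm hj.symm z y hz hy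
  have : (⟨x, hxi⟩ : s i) ∈ Subgroup.center (s i) := Subgroup.mem_center_iff.mpr fun y =>
    Subtype.ext (Subgroup.mem_centralizer_iff.mp (hcen hx) y y.2)
  rw [hZ i, Subgroup.mem_bot] at this
  exact Subgroup.mem_bot.mpr (congrArg Subtype.val this)

variable {p : ℕ} {ψ : MulAut H} {s : ZMod p → Subgroup H}

theorem map_pow_eq_of_map_eq_add_one (horb : ∀ i, (s i).map ψ.toMonoidHom = s (i + 1))
    (n : ℕ) (i : ZMod p) : (s i).map (ψ ^ n).toMonoidHom = s (i + n) := by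
  induction n with
  | zero => rw [Nat.cast_zero, add_zero]; exact Subgroup.map_id (s i)
  | succ n ih =>
    rw [pow_succ', show (ψ * ψ ^ n).toMonoidHom = ψ.toMonoidHom.comp (ψ ^ n).toMonoidHom from rfl,
      ← Subgroup.map_map, ih, horb, Nat.cast_succ, add_assoc]

variable [NeZero p]

theorem pow_val_add_one (hψ : ψ ^ p = 1) (j : ZMod p) : ψ ^ (j + 1).val = ψ * ψ ^ j.val := by
  have hmod (n : ℕ) : ψ ^ (n % p) = ψ ^ n := by
    conv_rhs => rw [← Nat.mod_add_div n p, pow_add, pow_mul, hψ, one_pow, mul_one]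
  have : j + 1 = ((j.val + 1 : ℕ) : ZMod p) := by push_cast [ZMod.natCast_zmod_val]; rfl
  rw [this, ZMod.val_natCast, hmod, pow_succ']

/-- Through `(a_j) ↦ ∏ ψ^j a_j`, the join of the `s j` is `∏ s 0`, on which `ψ` acts as the cyclic
shift; its fixed points are the constant tuples. -/
theorem exists_injective_range_eq_iSup_inf_autFixedSubgroup (hψ : ψ ^ p = 1)
    (horb : ∀ i, (s i).map ψ.toMonoidHom = s (i + 1))
    (hcomm : Pairwise fun i j => ∀ x y, x ∈ s i → y ∈ s j → Commute x y) (hind : iSupIndep s) :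
    ∃ δ : s 0 →* H, Function.Injective δ ∧ δ.range = (⨆ j, s j) ⊓ autFixedSubgroup ψ := by
  classical
  let ϕ : ZMod p → (s 0 →* H) := fun j => (ψ ^ j.val).toMonoidHom.comp (s 0).subtype
  have hϕ (j : ZMod p) : (ϕ j).range = s j := by
    rw [MonoidHom.range_comp, Subgroup.range_subtype, map_pow_eq_of_map_eq_add_one horb, zero_add,
      ZMod.natCast_zmod_val]
  have hϕcomm : Pairwise fun i j => ∀ x y, Commute (ϕ i x) (ϕ j y) := fun i j hij x y =>
    hcomm hij _ _ (hϕ i ▸ ⟨x, rfl⟩) (hϕ j ▸ ⟨y, rfl⟩)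
  let Φ := MonoidHom.noncommPiCoprod ϕ hϕcomm
  have hΦinj : Function.Injective Φ :=
    MonoidHom.injective_noncommPiCoprod_of_iSupIndep ϕ (by simpa only [hϕ] using hind)
      fun j => (ψ ^ j.val).injective.comp Subtype.val_injective
  have hΦrange : Φ.range = ⨆ j, s j := by
    rw [MonoidHom.noncommPiCoprod_range]; simp only [hϕ]
  let shift : (ZMod p → s 0) →* (ZMod p → s 0) :=
    MonoidHom.pi fun j => Pi.evalMonoidHom _ (j - 1)
  have hshift_apply (y : ZMod p → s 0) (k : ZMod p) : shift y k = y (k - 1) := rfl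
  have hshift : ψ.toMonoidHom.comp Φ = Φ.comp shift := MonoidHom.pi_ext fun j a => by
    have : shift (Pi.mulSingle j a) = Pi.mulSingle (j + 1) a := funext fun k => by
      by_cases hk : k = j + 1
      · simp [hshift_apply, hk]
      · simp [hshift_apply, hk, sub_eq_iff_eq_add]
    simp only [MonoidHom.comp_apply, this, Φ, MonoidHom.noncommPiCoprod_mulSingle, ϕ,
      pow_val_add_one hψ]
    rfl
  refine ⟨Φ.comp (Pi.constMonoidHom _ _), hΦinj.comp fun a b h => congrFun h 0,
    le_antisymm ?_ ?_⟩
  · rintro _ ⟨a, rfl⟩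
    exact ⟨hΦrange ▸ ⟨_, rfl⟩, DFunLike.congr_fun hshift (Pi.constMonoidHom _ _ a)⟩
  · rintro x ⟨hx, hfix⟩
    obtain ⟨y, rfl⟩ := hΦrange ▸ hx
    have hy : shift y = y := hΦinj ((DFunLike.congr_fun hshift y).symm.trans hfix)
    have hconst (n : ℕ) : y n = y 0 := by
      induction n with
      | zero => simp
      | succ n ih =>
        rw [← ih, ← congrFun hy, hshift_apply, Nat.cast_succ, add_sub_cancel_right]
    refine ⟨y 0, congrArg Φ (funext fun j => ?_)⟩
    rw [← ZMod.natCast_zmod_val j, hconst]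
    rfl

theorem iSup_inf_autFixedSubgroup_ne_bot_and_commutator_eq_self (hψ : ψ ^ p = 1)
    (hfac : ∀ i, IsSubnormal (s i) ∧ IsSimpleGroup (s i) ∧ IsNonabelian (s i))
    (horb : ∀ i, (s i).map ψ.toMonoidHom = s (i + 1)) (hinj : Function.Injective s) :
    (⨆ j, s j) ⊓ autFixedSubgroup ψ ≠ ⊥ ∧
      ⁅(⨆ j, s j) ⊓ autFixedSubgroup ψ, (⨆ j, s j) ⊓ autFixedSubgroup ψ⁆ =
        (⨆ j, s j) ⊓ autFixedSubgroup ψ := by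
  have hcomm := pairwise_commute_of_isSubnormal hfac hinj
  obtain ⟨δ, hδinj, hδ⟩ := exists_injective_range_eq_iSup_inf_autFixedSubgroup hψ horb hcomm
    (iSupIndep_of_commute_of_center_eq_bot hcomm fun i =>
      have := (hfac i).2.1; (hfac i).2.2.center_eq_bot)
  have := (hfac 0).2.1
  rw [← hδ, Ne, MonoidHom.range_eq_bot_iff]
  refine ⟨fun h => ?_, δ.commutator_range_eq_range (hfac 0).2.2.commutator_eq_top⟩
  obtain ⟨a, ha⟩ := exists_ne (1 : s 0)
  exact ha (hδinj (by simp [h]))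

end Diagonal

theorem MulAut.pow_eq_one_of_semiconj {G Q : Type*} [Group G] [Group Q] {π : G →* Q}
    (hπ : Function.Surjective π) {φ : MulAut G} {ψ : MulAut Q} (h : ∀ g, ψ (π g) = π (φ g))
    {n : ℕ} (hn : φ ^ n = 1) : ψ ^ n = 1 := by
  have key (m : ℕ) (g : G) : (ψ ^ m) (π g) = π ((φ ^ m) g) := by
    induction m generalizing g with
    | zero => rfl
    | succ m ih => rw [pow_succ', MulAut.mul_apply, ih, h, pow_succ', MulAut.mul_apply]
  ext q
  obtain ⟨g, rfl⟩ := hπ q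
  rw [key, hn]
  rfl

theorem QuotientGroup.le_sup_iff_map_mk'_le {G : Type*} [Group G] {N : Subgroup G} [N.Normal]
    {A B : Subgroup G} : A ≤ B ⊔ N ↔ A.map (mk' N) ≤ B.map (mk' N) := by
  rw [Subgroup.map_le_map_iff', ker_mk', sup_le_iff, and_iff_left le_sup_right]

theorem exists_index_lifting_diagonal_general
    (G : Type u) [Group G] [Finite G] (p : ℕ) (hp : p.Prime) (phi : MulAut G)
    (hord : orderOf phi = p) (hcop : Nat.Coprime p (Nat.card G))
    (k : ℕ)
    (psi : MulAut (G ⧸ upperM G k))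
    (hpsi : ∀ g : G, psi (QuotientGroup.mk' (upperM G k) g) =
      QuotientGroup.mk' (upperM G k) (phi g))
    (s : ZMod p → Subgroup (G ⧸ upperM G k))
    (hfac : ∀ i, IsSubnormal (s i) ∧ IsSimpleGroup ↥(s i) ∧ IsNonabelian ↥(s i))
    (horb : ∀ i, (s i).map psi.toMonoidHom = s (i + 1))
    (hinj : Function.Injective s) :
    ∃ i : ℕ, ∀ F : Subgroup G, F.map phi.toMonoidHom = F →
      (⨆ j, s j) ⊓ autFixedSubgroup psi ≤ F.map (QuotientGroup.mk' (upperM G k)) →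
      ∃ Dh : Subgroup G, Dh ≤ F ⊓ autFixedSubgroup phi ∧
        Dh.map (QuotientGroup.mk' (upperM G k)) = (⨆ j, s j) ⊓ autFixedSubgroup psi ∧
        Dh ≤ (upperL ↥(autFixedSubgroup phi) i).map (autFixedSubgroup phi).subtype ⊔
          upperM G k ∧
        ¬ Dh ≤ (upperM ↥(autFixedSubgroup phi) i).map (autFixedSubgroup phi).subtype ⊔
          upperM G k := by
  have := Fact.mk hp
  have hφ : phi ^ p = 1 := hord ▸ pow_orderOf_eq_one phi
  obtain ⟨hD, hDD⟩ := iSup_inf_autFixedSubgroup_ne_bot_and_commutator_eq_self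
    (MulAut.pow_eq_one_of_semiconj (QuotientGroup.mk'_surjective _) hpsi hφ) hfac horb hinj
  set π := QuotientGroup.mk' (upperM G k)
  set D := (⨆ j, s j) ⊓ autFixedSubgroup psi
  set C := autFixedSubgroup phi
  have hlift {F : Subgroup G} (hF : F.map phi.toMonoidHom = F) (hDF : D ≤ F.map π) :
      (F ⊓ C ⊓ D.comap π).map π = D :=
    map_inf_autFixedSubgroup_inf_comap_eq hcop hφ hpsi hF inf_le_right hDF
  have hDC : D ≤ (π.comp C.subtype).range := by
    rw [MonoidHom.range_comp, Subgroup.range_subtype]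
    exact le_map_autFixedSubgroup hcop hφ hpsi (QuotientGroup.mk'_surjective _) inf_le_right
  obtain ⟨i, hL, hM⟩ := exists_le_map_upperL_not_le_map_upperM (π.comp C.subtype) hD hDD hDC
  refine ⟨i, fun F hF hDF => ⟨F ⊓ C ⊓ D.comap π, inf_le_left, hlift hF hDF, ?_, ?_⟩⟩
  · rwa [QuotientGroup.le_sup_iff_map_mk'_le, Subgroup.map_map, hlift hF hDF]
  · rwa [QuotientGroup.le_sup_iff_map_mk'_le, Subgroup.map_map, hlift hF hDF]

/-- **Lemma.** In the situation of the paper: `G` is finite, `φ` has prime order `p`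
coprime to `|G|`, `[G, φ] = G`; `ψ` is the automorphism of `G/M_k` induced by `φ`;
`{s i}` (for `i : ZMod p`) is a nontrivial `φ`-orbit among the subnormal simple
factors of `U_k = L_k/M_k`, `S = s 0 × … × s (p-1)` is their product and
`D = C_S(φ)` the diagonal subgroup.  Then there is an index `i` such that for every
`φ`-invariant subgroup `F ≤ G` with `F·M_k/M_k ≥ D` there is a subgroup
`D̂ ≤ C_F(φ)` with (1) `D̂·M_k/M_k = D`, (2) `D̂ ≤ λ_i·M_k`, and (3) `D̂ ≰ μ_i·M_k`,
where `(μ_i, λ_i)` is the upper nonsoluble series of `C_G(φ)`. -/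
theorem exists_index_lifting_diagonal
    (G : Type u) [Group G] [Finite G] (p : ℕ) (hp : p.Prime) (phi : MulAut G)
    (hord : orderOf phi = p) (hcop : Nat.Coprime p (Nat.card G))
    (hcomm : autCommutator phi = ⊤)
    (k : ℕ) (hk : 1 ≤ k)
    (psi : MulAut (G ⧸ upperM G k))
    (hpsi : ∀ g : G, psi (QuotientGroup.mk' (upperM G k) g) =
      QuotientGroup.mk' (upperM G k) (phi g))
    (s : ZMod p → Subgroup (G ⧸ upperM G k))
    (hfac : ∀ i, IsSubnormal (s i) ∧ IsSimpleGroup ↥(s i) ∧ IsNonabelian ↥(s i))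
    (horb : ∀ i, (s i).map psi.toMonoidHom = s (i + 1))
    (hinj : Function.Injective s) :
    ∃ i : ℕ, ∀ F : Subgroup G, F.map phi.toMonoidHom = F →
      (⨆ j, s j) ⊓ autFixedSubgroup psi ≤ F.map (QuotientGroup.mk' (upperM G k)) →
      ∃ Dh : Subgroup G, Dh ≤ F ⊓ autFixedSubgroup phi ∧
        Dh.map (QuotientGroup.mk' (upperM G k)) = (⨆ j, s j) ⊓ autFixedSubgroup psi ∧
        Dh ≤ (upperL ↥(autFixedSubgroup phi) i).map (autFixedSubgroup phi).subtype ⊔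
          upperM G k ∧
        ¬ Dh ≤ (upperM ↥(autFixedSubgroup phi) i).map (autFixedSubgroup phi).subtype ⊔
          upperM G k :=
  exists_index_lifting_diagonal_general G p hp phi hord hcop k psi hpsi s hfac horb hinj
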